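/- Let G be a uniform pro-p group, Z_p[G] its abstract group algebra, I_d(G) the augmentation ideal, and M_d = pZ_p[G] + I_d(G). If g ∈ G satisfies ω(g) = t ≥ 1 (i.e. g lies in the t-th term P_t(G) of the lower p-series), then g − 1 ∈ M_d^t. -/

import Mathlib

/-! Basic definitions: pro-`p` groups, the lower `p`-series, powerful/uniform/extra-powerful
pro-`p` groups, compact `p`-adic analytic groups (via Lazard's characterisation), and the
completed group ring (Iwasawa algebra) of a profinite group. -/

noncomputable section

open scoped Classical

/-- The (topological closure of the) subgroup generated by `q`-th powers of elements of `H`. -/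
def Subgroup.qPow {G : Type} [Group G] [TopologicalSpace G] [IsTopologicalGroup G]
    (q : ℕ) (H : Subgroup G) : Subgroup G :=
  (Subgroup.closure ((fun g => g ^ q) '' (H : Set G))).topologicalClosure

/-- The lower `p`-series of a topological group; `lowerPSeries p G n` is the subgroup
`P_{n+1}(G)`, so that `lowerPSeries p G 0 = P_1(G) = G` and
`P_{i+1}(G) = closure (P_i(G)^p [P_i(G), G])`. -/
def lowerPSeries (p : ℕ) (G : Type) [Group G] [TopologicalSpace G] [IsTopologicalGroup G] :
    ℕ → Subgroup G
  | 0 => ⊤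
  | (n + 1) =>
      ((lowerPSeries p G n).qPow p ⊔ ⁅lowerPSeries p G n, (⊤ : Subgroup G)⁆).topologicalClosure

/-- A topological group is topologically finitely generated if some finite subset generates a
dense subgroup. -/
def IsTopFinitelyGenerated (G : Type) [Group G] [TopologicalSpace G] [IsTopologicalGroup G] :
    Prop :=
  ∃ S : Finset G, (Subgroup.closure (S : Set G)).topologicalClosure = ⊤

/-- The minimal number of topological generators of `G`. -/
def topGenRank (G : Type) [Group G] [TopologicalSpace G] [IsTopologicalGroup G] : ℕ :=
  sInf {n : ℕ | ∃ S : Finset G, S.card = n ∧ (Subgroup.closure (S : Set G)).topologicalClosure = ⊤}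

/-- A profinite group which is pro-`p`: it is a compact, Hausdorff, totally disconnected
topological group all of whose continuous finite quotients are `p`-groups. -/
def IsProPGroup (p : ℕ) (G : Type) [Group G] [TopologicalSpace G] : Prop :=
  IsTopologicalGroup G ∧ CompactSpace G ∧ T2Space G ∧ TotallyDisconnectedSpace G ∧
    ∀ N : OpenNormalSubgroup G, IsPGroup p (G ⧸ N.toSubgroup)

/-- `G` is a powerful pro-`p` group (for odd `p`): `[G,G] ⊆ closure (G^p)`. -/
def IsPowerful (p : ℕ) (G : Type) [Group G] [TopologicalSpace G] [IsTopologicalGroup G] : Prop :=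
  ⁅(⊤ : Subgroup G), (⊤ : Subgroup G)⁆ ≤ (⊤ : Subgroup G).qPow p

/-- `G` is an extra-powerful pro-`p` group: `[G,G] ⊆ closure (G^{p²})`. -/
def IsExtraPowerful (p : ℕ) (G : Type) [Group G] [TopologicalSpace G] [IsTopologicalGroup G] :
    Prop :=
  ⁅(⊤ : Subgroup G), (⊤ : Subgroup G)⁆ ≤ (⊤ : Subgroup G).qPow (p ^ 2)

/-- `G` is a uniform pro-`p` group: a finitely generated powerful pro-`p` group for which
the `p`-power maps `P_i(G) → P_{i+1}(G)` between consecutive terms of the lower `p`-series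
are bijective. -/
def IsUniform (p : ℕ) (G : Type) [Group G] [TopologicalSpace G] [IsTopologicalGroup G] : Prop :=
  IsProPGroup p G ∧ IsPowerful p G ∧ IsTopFinitelyGenerated G ∧
    ∀ n : ℕ, Set.BijOn (fun g => g ^ p)
      (lowerPSeries p G n : Set G) (lowerPSeries p G (n + 1) : Set G)

/-- A compact `p`-adic analytic group, via Lazard's characterisation: a profinite group
containing an open uniform pro-`p` subgroup. -/
def IsCompactPadicAnalytic (p : ℕ) (G : Type) [Group G] [TopologicalSpace G] : Prop :=
  ∃ _ : IsTopologicalGroup G, CompactSpace G ∧ T2Space G ∧ TotallyDisconnectedSpace G ∧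
    ∃ H : Subgroup G, IsOpen (H : Set G) ∧ IsUniform p H

/-- `G` has no `p`-torsion. -/
def HasNoPTorsion (p : ℕ) (G : Type) [Group G] : Prop :=
  ∀ g : G, g ^ p = 1 → g = 1

section RingPowers

variable {Λ : Type} [Ring Λ]

/-- The additive subgroup generated by all products of `n` elements of `S` (for `n = 0` this is
the whole ring, matching the convention `𝔪^0 = Λ`).  When `S` is a two-sided ideal, this is the
`n`-th power of `S`. -/
def AddSubgroup.ringPow (S : AddSubgroup Λ) : ℕ → AddSubgroup Λ
  | 0 => ⊤
  | (n + 1) => AddSubgroup.closure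
      {x : Λ | ∃ l : List Λ, l.length = n + 1 ∧ (∀ y ∈ l, y ∈ S) ∧ x = l.prod}

end RingPowers


section GroupAlgebra

variable (p : ℕ) [Fact p.Prime] (G : Type) [Group G] [TopologicalSpace G] [IsTopologicalGroup G]

/-- The augmentation map `ℤ_p[G] → ℤ_p` of the abstract group algebra. -/
def maAug : MonoidAlgebra ℤ_[p] G →+* ℤ_[p] :=
  MonoidAlgebra.liftNCRingHom (RingHom.id ℤ_[p]) (1 : G →* ℤ_[p]) fun _ _ => Commute.all _ _

/-- The two-sided ideal `𝔪_d = p·ℤ_p[G] + I_d(G)` of the abstract group algebra `ℤ_p[G]`,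
where `I_d(G)` is the augmentation ideal; realised as an additive subgroup. -/
def mdIdeal : AddSubgroup (MonoidAlgebra ℤ_[p] G) :=
  (AddMonoidHom.mulLeft ((p : ℕ) : MonoidAlgebra ℤ_[p] G)).range ⊔
    (RingHom.ker (maAug p G)).toAddSubgroup

/-- Lazard's `p`-valuation `ω : G → ℕ_{>0} ∪ {∞}` attached to the lower `p`-series:
`ω(g) = sup { i  :  g ∈ P_i(G) }` (recall `lowerPSeries p G t = P_{t+1}(G)`). -/
def omegaVal (g : G) : ℕ∞ :=
  sSup {x : ℕ∞ | ∃ t : ℕ, x = (t : ℕ∞) + 1 ∧ g ∈ lowerPSeries p G t}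

end GroupAlgebra

/-! By uniformity `g = h ^ p ^ (t - 1)` for some `h`, and `h - 1` lies in the augmentation ideal,
hence in `𝔪_d`. So it suffices that `x - 1 ∈ 𝔪_d ^ s` implies `x ^ p - 1 ∈ 𝔪_d ^ (s + 1)`:
writing `x = a + 1`, the binomial theorem gives `x ^ p - 1 = a ^ p + p * r` with `r` a
combination of powers of `a`, and both `a ^ p ∈ 𝔪_d ^ (s * p)` and `p * r ∈ 𝔪_d * 𝔪_d ^ s`
lie in `𝔪_d ^ (s + 1)`. -/

namespace AddSubgroup

variable {Λ : Type} [Ring Λ] {S : AddSubgroup Λ}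

theorem list_prod_mem_ringPow {l : List Λ} (hl : ∀ y ∈ l, y ∈ S) :
    l.prod ∈ S.ringPow l.length := by
  cases hlen : l.length with
  | zero => exact mem_top _
  | succ n => exact subset_closure ⟨l, hlen, hl, rfl⟩

theorem ringPow_one (S : AddSubgroup Λ) : S.ringPow 1 = S := by
  have hgen : {x : Λ | ∃ l : List Λ, l.length = 0 + 1 ∧ (∀ y ∈ l, y ∈ S) ∧ x = l.prod} = S := by
    ext x
    constructor
    · rintro ⟨l, hlen, hl, rfl⟩
      obtain ⟨y, rfl⟩ := List.length_eq_one_iff.1 hlen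
      simpa using hl
    · intro hx
      exact ⟨[x], rfl, by simpa using hx, by simp⟩
  rw [ringPow, hgen, closure_eq]

theorem mul_mem_ringPow_add {m n : ℕ} (hm : m ≠ 0) (hn : n ≠ 0) {a b : Λ}
    (ha : a ∈ S.ringPow m) (hb : b ∈ S.ringPow n) : a * b ∈ S.ringPow (m + n) := by
  obtain ⟨m, rfl⟩ := Nat.exists_eq_succ_of_ne_zero hm
  obtain ⟨n, rfl⟩ := Nat.exists_eq_succ_of_ne_zero hn
  induction ha using closure_induction with
  | mem x hx =>
    induction hb using closure_induction with
    | mem y hy =>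
      obtain ⟨l, hlen, hl, rfl⟩ := hx
      obtain ⟨l', hlen', hl', rfl⟩ := hy
      have := list_prod_mem_ringPow (S := S) (l := l ++ l') fun y hy =>
        (List.mem_append.1 hy).elim (hl y) (hl' y)
      rwa [List.prod_append, List.length_append, hlen, hlen'] at this
    | zero => simp
    | add y z _ _ hy hz => simpa [mul_add] using add_mem hy hz
    | neg y _ hy => simpa using neg_mem hy
  | zero => simp
  | add x y _ _ hx hy => simpa [add_mul] using add_mem hx hy
  | neg x _ hx => simpa using neg_mem hx

theorem pow_mem_ringPow_mul {s k : ℕ} {a : Λ} (ha : a ∈ S.ringPow s) (hk : k ≠ 0) :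
    a ^ k ∈ S.ringPow (s * k) := by
  rcases eq_or_ne s 0 with rfl | hs
  · rw [zero_mul]
    exact mem_top _
  obtain ⟨k, rfl⟩ := Nat.exists_eq_succ_of_ne_zero hk
  clear hk
  induction k with
  | zero => simpa using ha
  | succ k ih =>
    rw [pow_succ, Nat.mul_succ]
    exact mul_mem_ringPow_add (Nat.mul_ne_zero hs k.succ_ne_zero) hs ih ha

section LeftAbsorbing

variable (hS : ∀ r, ∀ x ∈ S, r * x ∈ S)
include hS

theorem mul_mem_ringPow (r : Λ) {n : ℕ} {x : Λ} (hx : x ∈ S.ringPow n) :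
    r * x ∈ S.ringPow n := by
  cases n with
  | zero => exact mem_top _
  | succ n =>
    induction hx using closure_induction with
    | mem y hy =>
      obtain ⟨_ | ⟨a, l⟩, hlen, hl, rfl⟩ := hy
      · simp at hlen
      have hlen' : (r * a :: l).length = n + 1 := hlen
      rw [← hlen', List.prod_cons, ← mul_assoc, ← List.prod_cons]
      refine list_prod_mem_ringPow fun y hy => ?_
      rcases List.mem_cons.1 hy with rfl | hy
      · exact hS r a (hl a List.mem_cons_self)
      · exact hl y (List.mem_cons_of_mem a hy)
    | zero => simp
    | add y z _ _ hy hz => simpa [mul_add] using add_mem hy hz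
    | neg y _ hy => simpa using neg_mem hy

theorem ringPow_antitone : Antitone S.ringPow := by
  refine antitone_nat_of_succ_le fun n => ?_
  cases n with
  | zero => exact le_top
  | succ n =>
    refine (closure_le _).2 ?_
    rintro _ ⟨_ | ⟨a, l⟩, hlen, hl, rfl⟩
    · simp at hlen
    have := list_prod_mem_ringPow (S := S) (l := l) fun y hy => hl y (by simp [hy])
    rw [List.length_cons, Nat.succ_inj] at hlen
    rw [hlen] at this
    exact mul_mem_ringPow hS a this

variable {p : ℕ} (hp : p.Prime) (hpS : (p : Λ) ∈ S)
include hp hpS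

theorem pow_prime_sub_one_mem_ringPow_succ {s : ℕ} (hs : s ≠ 0) {x : Λ}
    (hx : x - 1 ∈ S.ringPow s) : x ^ p - 1 ∈ S.ringPow (s + 1) := by
  obtain ⟨a, rfl⟩ : ∃ a, x = a + 1 := ⟨x - 1, (sub_add_cancel x 1).symm⟩
  rw [add_sub_cancel_right] at hx
  rw [(Commute.one_right a).add_pow_prime_eq' hp, one_pow, add_right_comm, add_sub_cancel_right]
  refine add_mem (ringPow_antitone hS ?_ (pow_mem_ringPow_mul hx hp.ne_zero)) ?_
  · nlinarith [hp.two_le, Nat.one_le_iff_ne_zero.2 hs]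
  rw [add_comm s 1]
  refine mul_mem_ringPow_add one_ne_zero hs (by rwa [ringPow_one]) (sum_mem fun k hk => ?_)
  rw [one_pow, mul_one, ← nsmul_eq_mul']
  have hk : k ≠ 0 := (Finset.mem_Ioo.1 hk).1.ne'
  exact nsmul_mem (ringPow_antitone hS (Nat.le_mul_of_pos_right s (Nat.pos_of_ne_zero hk))
    (pow_mem_ringPow_mul hx hk)) _

theorem pow_prime_pow_sub_one_mem_ringPow {x : Λ} (hx : x - 1 ∈ S) (n : ℕ) :
    x ^ p ^ n - 1 ∈ S.ringPow (n + 1) := by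
  induction n with
  | zero => simpa [ringPow_one] using hx
  | succ n ih =>
    rw [pow_succ, pow_mul]
    exact pow_prime_sub_one_mem_ringPow_succ hS hp hpS n.succ_ne_zero ih

end LeftAbsorbing

end AddSubgroup

section GroupAlgebra

variable {p : ℕ} [Fact p.Prime] {G : Type} [Group G]

theorem natCast_mem_mdIdeal : ((p : ℕ) : MonoidAlgebra ℤ_[p] G) ∈ mdIdeal p G :=
  AddSubgroup.mem_sup_left ⟨1, mul_one _⟩

theorem mul_mem_mdIdeal (r : MonoidAlgebra ℤ_[p] G) {x : MonoidAlgebra ℤ_[p] G}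
    (hx : x ∈ mdIdeal p G) : r * x ∈ mdIdeal p G := by
  obtain ⟨_, ⟨y, rfl⟩, z, hz, rfl⟩ := AddSubgroup.mem_sup.1 hx
  rw [mul_add]
  refine add_mem (AddSubgroup.mem_sup_left ⟨r * y, ?_⟩) (AddSubgroup.mem_sup_right ?_)
  · simp only [AddMonoidHom.coe_mulLeft]
    rw [← mul_assoc, ← mul_assoc, (Nat.cast_commute p r).eq]
  · exact (RingHom.ker (maAug p G)).mul_mem_left r hz

theorem of_sub_one_mem_mdIdeal (h : G) : MonoidAlgebra.of ℤ_[p] G h - 1 ∈ mdIdeal p G := by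
  refine AddSubgroup.mem_sup_right (RingHom.mem_ker.2 ?_)
  rw [map_sub, map_one, sub_eq_zero]
  simp [maAug, MonoidAlgebra.liftNCRingHom]

end GroupAlgebra

theorem IsUniform.exists_pow_pow_eq {p : ℕ} {G : Type} [Group G] [TopologicalSpace G]
    [IsTopologicalGroup G] (hU : IsUniform p G) {n : ℕ} {g : G}
    (hg : g ∈ lowerPSeries p G n) : ∃ h : G, h ^ p ^ n = g := by
  induction n generalizing g with
  | zero => exact ⟨g, pow_one g⟩
  | succ n ih =>
    obtain ⟨g', hg', rfl⟩ := (hU.2.2.2 n).surjOn hg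
    obtain ⟨h, rfl⟩ := ih hg'
    exact ⟨h, by rw [pow_succ, pow_mul]⟩

theorem of_sub_one_mem_md_pow_general
    (p : ℕ) [Fact p.Prime] (G : Type) [Group G] [TopologicalSpace G] [IsTopologicalGroup G]
    (hU : IsUniform p G) (g : G) (t : ℕ)
    (hmem : g ∈ lowerPSeries p G (t - 1)) :
    MonoidAlgebra.of ℤ_[p] G g - 1 ∈ (mdIdeal p G).ringPow t := by
  cases t with
  | zero => exact AddSubgroup.mem_top _
  | succ n =>
    obtain ⟨h, rfl⟩ := hU.exists_pow_pow_eq hmem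
    rw [map_pow]
    exact AddSubgroup.pow_prime_pow_sub_one_mem_ringPow (fun r _ => mul_mem_mdIdeal r) Fact.out
      natCast_mem_mdIdeal (of_sub_one_mem_mdIdeal h) n

/-- **Statement 3.** Let `G` be a uniform pro-`p` group, `ℤ_p[G]` its abstract group algebra,
`I_d(G)` the augmentation ideal, and `𝔪_d = p·ℤ_p[G] + I_d(G)`.  If `g ∈ G` satisfies
`ω(g) = t ≥ 1` (i.e. `g` lies in the `t`-th term `P_t(G)` of the lower `p`-series), then
`g − 1 ∈ 𝔪_d^t`. -/
theorem of_sub_one_mem_md_pow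
    (p : ℕ) [Fact p.Prime] (G : Type) [Group G] [TopologicalSpace G] [IsTopologicalGroup G]
    (hU : IsUniform p G) (g : G) (t : ℕ) (ht : 1 ≤ t)
    (homega : omegaVal p G g = (t : ℕ∞)) (hmem : g ∈ lowerPSeries p G (t - 1)) :
    MonoidAlgebra.of ℤ_[p] G g - 1 ∈ (mdIdeal p G).ringPow t :=
  of_sub_one_mem_md_pow_general p G hU g t hmem
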